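/- Let p be a prime, k a field of characteristic p, γ ∈ k a root of unity of order q, and g(ζ) = γζ + ... a power series in k[[ζ]]. Set i_n = ord((g^{q p^n}(ζ) − ζ)/ζ) and suppose i_n is finite. If i_n is not divisible by p, then i_{n+1} ≥ p·i_n + q; if i_n is divisible by p, then i_{n+1} = p·i_n. -/

import Mathlib

open PowerSeries

/-- Formal composition `f ∘ g` of power series (correct when `g` has zero constant term). -/
noncomputable def fcomp {k : Type*} [CommRing k] (f g : PowerSeries k) : PowerSeries k :=
  PowerSeries.mk fun n =>
    ∑ m ∈ Finset.range (n + 1), (PowerSeries.coeff m f) * (PowerSeries.coeff n (g ^ m))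

noncomputable def fit {k : Type*} [CommRing k] (g : PowerSeries k) : ℕ → PowerSeries k
  | 0 => PowerSeries.X
  | n + 1 => fcomp g (fit g n)

/-!
Write `f = g^{∘ q p^n} = X + u X^{i+1} + ⋯` with `u ≠ 0`. Since `f` commutes with `g`, comparing
the coefficients of `X^{i+1}` in `g ∘ f` and `f ∘ g` gives `γ^i = 1`, so `q ∣ i`; the same holds
for every iterate of `g` tangent to the identity.

Let `C φ = φ ∘ f` and `Δ = C - 1`. Applying `Δ` to a series of order `m` raises the order by `i`
and multiplies the leading coefficient by `m u`. In characteristic `p` we have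
`C^p = 1 + Δ^p`, hence `f^{∘p} - X = Δ^p X = u^p ∏_{t<p} (t i + 1) X^{p i + 1} + ⋯`.
The product is `1` if `p ∣ i` and `0` otherwise; in the latter case the order `j + 1` of
`f^{∘p} - X` satisfies `p i < j` and `q ∣ j`, whence `p i + q ≤ j`.
-/

namespace PowerSeries

variable {R : Type*} [CommRing R]

theorem coeff_pow_of_lt {g : R⟦X⟧} (hg : constantCoeff g = 0) {n m : ℕ} (h : n < m) :
    coeff n (g ^ m) = 0 :=
  X_pow_dvd_iff.mp (pow_dvd_pow_of_dvd (X_dvd_iff.mpr hg) m) n h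

theorem coeff_subst_eq_sum {g : R⟦X⟧} (hg : constantCoeff g = 0) (f : R⟦X⟧) (n : ℕ) :
    coeff n (f.subst g) = ∑ m ∈ Finset.range (n + 1), coeff m f * coeff n (g ^ m) := by
  rw [coeff_subst' (HasSubst.of_constantCoeff_zero' hg)]
  refine finsum_eq_sum_of_support_subset _ fun m hm => Finset.mem_coe.mpr (Finset.mem_range.mpr ?_)
  by_contra! hmn
  exact hm (by simp [coeff_pow_of_lt hg (show n < m by omega)])

theorem coeff_mul_of_X_pow_dvd {φ ψ : R⟦X⟧} {a b : ℕ} (hφ : X ^ a ∣ φ) (hψ : X ^ b ∣ ψ) :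
    coeff (a + b) (φ * ψ) = coeff a φ * coeff b ψ := by
  obtain ⟨φ, rfl⟩ := hφ
  obtain ⟨ψ, rfl⟩ := hψ
  rw [show X ^ a * φ * (X ^ b * ψ) = X ^ (a + b) * (φ * ψ) by ring]
  simp [coeff_X_pow_mul']

theorem coeff_pow_of_X_dvd {g : R⟦X⟧} (hg : X ∣ g) (m : ℕ) :
    coeff m (g ^ m) = coeff 1 g ^ m := by
  induction m with
  | zero => simp
  | succ m ih =>
    rw [pow_succ, coeff_mul_of_X_pow_dvd (pow_dvd_pow_of_dvd hg m) (by rwa [pow_one]), ih, pow_succ]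

variable {h : R⟦X⟧} {i : ℕ}

theorem X_dvd_of_X_pow_succ_dvd_sub_X (hh : X ^ (i + 1) ∣ h - X) : X ∣ h := by
  simpa using dvd_add (dvd_trans (dvd_pow_self (X : R⟦X⟧) i.succ_ne_zero) hh) (dvd_refl X)

theorem coeff_one_of_X_pow_succ_dvd_sub_X (hi : 1 ≤ i) (hh : X ^ (i + 1) ∣ h - X) :
    coeff 1 h = 1 := by
  simpa [sub_eq_zero] using X_pow_dvd_iff.mp hh 1 (by omega)

theorem X_pow_add_dvd_pow_sub_X_pow_and_coeff (hi : 1 ≤ i) (hh : X ^ (i + 1) ∣ h - X) (r : ℕ) :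
    X ^ (r + i) ∣ h ^ r - X ^ r ∧
      coeff (r + i) (h ^ r - X ^ r) = (r : R) * coeff (i + 1) (h - X) := by
  induction r with
  | zero => simp
  | succ r ih =>
    have hX : X ^ 1 ∣ h := by rw [pow_one]; exact X_dvd_of_X_pow_succ_dvd_sub_X hh
    have hsplit : h ^ (r + 1) - X ^ (r + 1) = h * (h ^ r - X ^ r) + (h - X) * X ^ r := by ring
    have e₁ : r + 1 + i = 1 + (r + i) := by omega
    have e₂ : r + 1 + i = (i + 1) + r := by omega
    refine ⟨hsplit ▸ dvd_add ?_ ?_, ?_⟩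
    · rw [e₁, pow_add]; exact mul_dvd_mul hX ih.1
    · rw [e₂, pow_add]; exact mul_dvd_mul hh (dvd_refl _)
    · rw [hsplit, map_add, e₁, coeff_mul_of_X_pow_dvd hX ih.1, ← e₁, e₂,
        coeff_mul_of_X_pow_dvd hh (dvd_refl _), ih.2, coeff_one_of_X_pow_succ_dvd_sub_X hi hh,
        coeff_X_pow_self]
      push_cast
      ring

theorem coeff_subst_sub_self (f : R⟦X⟧) (hh : constantCoeff h = 0) (n : ℕ) :
    coeff n (f.subst h - f) = ∑ r ∈ Finset.range (n + 1), coeff r f * coeff n (h ^ r - X ^ r) := by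
  have hf := coeff_subst_eq_sum constantCoeff_X f n
  rw [X_subst] at hf
  simp only [map_sub, coeff_subst_eq_sum hh, hf, mul_sub, Finset.sum_sub_distrib]

theorem X_pow_add_dvd_subst_sub_self_and_coeff (hi : 1 ≤ i) (hh : X ^ (i + 1) ∣ h - X)
    {f : R⟦X⟧} {m : ℕ} (hf : X ^ m ∣ f) :
    X ^ (m + i) ∣ f.subst h - f ∧
      coeff (m + i) (f.subst h - f) = coeff m f * ((m : R) * coeff (i + 1) (h - X)) := by
  have hh0 : constantCoeff h = 0 := X_dvd_iff.mp (X_dvd_of_X_pow_succ_dvd_sub_X hh)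
  have hterm : ∀ r s, s ≤ m + i → (r, s) ≠ (m, m + i) →
      coeff r f * coeff s (h ^ r - X ^ r) = 0 := by
    intro r s hs hrs
    rcases lt_or_ge r m with hr | hr
    · rw [X_pow_dvd_iff.mp hf r hr, zero_mul]
    · rw [X_pow_dvd_iff.mp (X_pow_add_dvd_pow_sub_X_pow_and_coeff hi hh r).1 s (by grind), mul_zero]
  refine ⟨X_pow_dvd_iff.mpr fun s hs => ?_, ?_⟩
  · rw [coeff_subst_sub_self f hh0]
    exact Finset.sum_eq_zero fun r _ => hterm r s hs.le (by grind)
  · rw [coeff_subst_sub_self f hh0,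
      Finset.sum_eq_single m (fun r _ hr => hterm r _ le_rfl (by grind)) (by grind),
      (X_pow_add_dvd_pow_sub_X_pow_and_coeff hi hh m).2]

theorem X_pow_mul_add_one_dvd_iterate_subst_sub_self_and_coeff (hi : 1 ≤ i)
    (hh : X ^ (i + 1) ∣ h - X) (r : ℕ) :
    X ^ (r * i + 1) ∣ (fun f : R⟦X⟧ => f.subst h - f)^[r] X ∧
      coeff (r * i + 1) ((fun f : R⟦X⟧ => f.subst h - f)^[r] X) =
        coeff (i + 1) (h - X) ^ r * ∏ t ∈ Finset.range r, ((t * i + 1 : ℕ) : R) := by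
  induction r with
  | zero => simp
  | succ r ih =>
    have e : (r + 1) * i + 1 = (r * i + 1) + i := by ring
    obtain ⟨hdvd, hcoeff⟩ := X_pow_add_dvd_subst_sub_self_and_coeff hi hh ih.1
    rw [Function.iterate_succ_apply', e, hcoeff, ih.2, Finset.prod_range_succ]
    refine ⟨hdvd, ?_⟩
    push_cast
    ring

end PowerSeries

section Composition

variable {R : Type*} [CommRing R] {g : R⟦X⟧}

theorem fcomp_eq_subst (f : R⟦X⟧) (hg : constantCoeff g = 0) : fcomp f g = f.subst g := by
  ext n
  rw [fcomp, coeff_mk, coeff_subst_eq_sum hg]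

theorem constantCoeff_fcomp (f g : R⟦X⟧) : constantCoeff (fcomp f g) = constantCoeff f := by
  rw [← coeff_zero_eq_constantCoeff_apply, fcomp, coeff_mk]
  simp

theorem coeff_one_fcomp (f g : R⟦X⟧) : coeff 1 (fcomp f g) = coeff 1 f * coeff 1 g := by
  simp [fcomp, Finset.sum_range_succ, coeff_one]

theorem constantCoeff_fit (hg : constantCoeff g = 0) : ∀ m, constantCoeff (fit g m) = 0
  | 0 => constantCoeff_X
  | _ + 1 => (constantCoeff_fcomp _ _).trans hg

theorem hasSubst_fit (hg : constantCoeff g = 0) (m : ℕ) : HasSubst (fit g m) :=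
  HasSubst.of_constantCoeff_zero' (constantCoeff_fit hg m)

theorem coeff_one_fit (g : R⟦X⟧) : ∀ m, coeff 1 (fit g m) = coeff 1 g ^ m
  | 0 => by simp [fit]
  | m + 1 => by rw [fit, coeff_one_fcomp, coeff_one_fit g m, pow_succ']

theorem fit_succ (hg : constantCoeff g = 0) (m : ℕ) : fit g (m + 1) = g.subst (fit g m) :=
  fcomp_eq_subst g (constantCoeff_fit hg m)

theorem fit_one (hg : constantCoeff g = 0) : fit g 1 = g := by
  rw [fit_succ hg, fit, X_subst]

theorem fit_add (hg : constantCoeff g = 0) (s t : ℕ) :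
    fit g (s + t) = (fit g s).subst (fit g t) := by
  induction s with
  | zero => rw [zero_add, fit, subst_X (hasSubst_fit hg t)]
  | succ s ih =>
    rw [Nat.succ_add, fit_succ hg, ih, fit_succ hg,
      subst_comp_subst_apply (hasSubst_fit hg s) (hasSubst_fit hg t)]

theorem fit_succ' (hg : constantCoeff g = 0) (m : ℕ) : fit g (m + 1) = (fit g m).subst g := by
  rw [fit_add hg, fit_one hg]

theorem fit_mul (hg : constantCoeff g = 0) (a b : ℕ) : fit g (a * b) = fit (fit g a) b := by
  induction b with
  | zero => rfl
  | succ b ih => rw [Nat.mul_succ, add_comm, fit_add hg, ih, fit_succ (constantCoeff_fit hg a)]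

end Composition

section CharP

variable {R : Type*} [CommRing R] (p : ℕ) [CharP R p]

theorem charP_end_powerSeries : CharP (Module.End R R⟦X⟧) p :=
  Module.charP_end ⟨1, eq_bot_iff.mpr fun r hr => C_injective (by
    simpa [Ideal.mem_torsionOf_iff, smul_eq_C_mul] using hr)⟩

variable [Fact p.Prime]

theorem prod_range_natCast_mul_add_one (i : ℕ) :
    ∏ t ∈ Finset.range p, ((t * i + 1 : ℕ) : R) = if p ∣ i then 1 else 0 := by
  split_ifs with hpi
  · refine Finset.prod_eq_one fun t _ => ?_
    rw [Nat.cast_add, Nat.cast_mul, (CharP.cast_eq_zero_iff R p i).mpr hpi, mul_zero, zero_add,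
      Nat.cast_one]
  · have hi : (i : ZMod p) ≠ 0 := by rwa [Ne, ZMod.natCast_eq_zero_iff]
    -- `t = -i⁻¹ mod p` kills the factor `t * i + 1`
    refine Finset.prod_eq_zero (Finset.mem_range.mpr (ZMod.val_lt (-(i : ZMod p)⁻¹))) ?_
    rw [CharP.cast_eq_zero_iff R p, ← ZMod.natCast_eq_zero_iff]
    push_cast
    rw [ZMod.natCast_zmod_val, neg_mul, inv_mul_cancel₀ hi, neg_add_cancel]

theorem X_pow_mul_add_one_dvd_fit_sub_X_and_coeff {h : R⟦X⟧} {i : ℕ} (hi : 1 ≤ i)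
    (hh : X ^ (i + 1) ∣ h - X) :
    X ^ (p * i + 1) ∣ fit h p - X ∧
      coeff (p * i + 1) (fit h p - X) = coeff (i + 1) (h - X) ^ p * (if p ∣ i then 1 else 0) := by
  have hh0 : constantCoeff h = 0 := X_dvd_iff.mp (X_dvd_of_X_pow_succ_dvd_sub_X hh)
  have := charP_end_powerSeries (R := R) p
  let C : Module.End R R⟦X⟧ := (substAlgHom (HasSubst.of_constantCoeff_zero' hh0)).toLinearMap
  have hC : ∀ f, C f = f.subst h := fun f => by simp [C, coe_substAlgHom]
  have hCfit : ∀ m, (C ^ m) X = fit h m := fun m => by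
    induction m with
    | zero => rfl
    | succ m ih => rw [pow_succ', Module.End.mul_apply, ih, hC, fit_succ' hh0]
  have hCp : C ^ p = 1 + (C - 1) ^ p := by
    simpa using add_pow_char_of_commute (R := Module.End R R⟦X⟧) p (Commute.one_left (C - 1))
  have hΔ : ⇑(C - 1) = fun f : R⟦X⟧ => f.subst h - f := funext fun f => by simp [hC]
  rw [← hCfit, hCp, LinearMap.add_apply, Module.End.one_apply, add_sub_cancel_left,
    Module.End.pow_apply, hΔ, ← prod_range_natCast_mul_add_one p i]
  exact X_pow_mul_add_one_dvd_iterate_subst_sub_self_and_coeff hi hh p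

end CharP

section Commuting

variable {R : Type*} [CommRing R] [IsDomain R] {g : R⟦X⟧}

theorem coeff_one_pow_eq_one_of_subst_comm {f : R⟦X⟧} {a : ℕ} (hg : constantCoeff g = 0)
    (hγ : coeff 1 g ≠ 0) (ha : 1 ≤ a) (hf : X ^ (a + 1) ∣ f - X) (hu : coeff (a + 1) (f - X) ≠ 0)
    (hcomm : g.subst f = f.subst g) : coeff 1 g ^ a = 1 := by
  have hgX : X ∣ g := X_dvd_iff.mpr hg
  have hl := (X_pow_add_dvd_subst_sub_self_and_coeff ha hf (f := g) (m := 1) (by rwa [pow_one])).2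
  have hr : coeff (a + 1) (f.subst g - g) = coeff (a + 1) (f - X) * coeff 1 g ^ (a + 1) := by
    have hs := HasSubst.of_constantCoeff_zero' hg
    rw [show f.subst g - g = (f - X).subst g by rw [subst_sub hs, subst_X hs],
      coeff_subst_eq_sum hg, Finset.sum_eq_single (a + 1), coeff_pow_of_X_dvd hgX]
    · exact fun r hr_mem hne => by rw [X_pow_dvd_iff.mp hf r (by grind), zero_mul]
    · simp
  rw [Nat.cast_one, one_mul, add_comm, hcomm, hr] at hl
  have hcancel : coeff (a + 1) (f - X) * (coeff 1 g * coeff 1 g ^ a) =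
      coeff (a + 1) (f - X) * (coeff 1 g * 1) := by
    linear_combination hl
  exact mul_left_cancel₀ hγ (mul_left_cancel₀ hu hcancel)

theorem one_le_and_orderOf_dvd_of_order_fit_sub_X (hg : constantCoeff g = 0) (hγ : coeff 1 g ≠ 0)
    {M j : ℕ} (hM : coeff 1 g ^ M = 1) (hj : order (fit g M - X) = (j + 1 : ℕ)) :
    1 ≤ j ∧ orderOf (coeff 1 g) ∣ j := by
  obtain ⟨hne, hlow⟩ := order_eq_nat.mp hj
  have hj1 : 1 ≤ j := by
    by_contra! h
    obtain rfl : j = 0 := by omega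
    simp [coeff_one_fit, hM] at hne
  refine ⟨hj1, orderOf_dvd_of_pow_eq_one ?_⟩
  refine coeff_one_pow_eq_one_of_subst_comm hg hγ hj1 (X_pow_dvd_iff.mpr hlow) hne ?_
  rw [← fit_succ hg, fit_succ' hg]

end Commuting

/-- Keating-type lemma: with `i_n = ord((g^{q p^n}(ζ) - ζ)/ζ)` finite, if `p ∤ i_n` then
`i_{n+1} ≥ p·i_n + q`, and if `p ∣ i_n` then `i_{n+1} = p·i_n`. -/
theorem stmt9 {k : Type*} [Field k] (p : ℕ) (hp : p.Prime) [CharP k p]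
    (γ : k) (q : ℕ) (hq0 : 0 < q) (hγq : γ ^ q = 1)
    (hqmin : ∀ j, 0 < j → j < q → γ ^ j ≠ 1)
    (g : PowerSeries k) (hg0 : PowerSeries.constantCoeff g = 0)
    (hg1 : PowerSeries.coeff 1 g = γ)
    (n : ℕ) (i : ℕ)
    (hi : PowerSeries.order (fit g (q * p ^ n) - PowerSeries.X) = ((i + 1 : ℕ) : ℕ∞)) :
    (¬ p ∣ i →
      ∀ j : ℕ,
        PowerSeries.order (fit g (q * p ^ (n + 1)) - PowerSeries.X) = ((j + 1 : ℕ) : ℕ∞) →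
        p * i + q ≤ j) ∧
    (p ∣ i →
      PowerSeries.order (fit g (q * p ^ (n + 1)) - PowerSeries.X) = ((p * i + 1 : ℕ) : ℕ∞)) := by
  have : Fact p.Prime := ⟨hp⟩
  subst hg1
  have hγ0 : coeff 1 g ≠ 0 := fun h => by simp [h, zero_pow hq0.ne'] at hγq
  have horder : orderOf (coeff 1 g) = q :=
    (orderOf_eq_iff hq0).mpr ⟨hγq, fun m hm hm0 => hqmin m hm0 hm⟩
  have hpow : ∀ m, coeff 1 g ^ (q * m) = 1 := fun m => by rw [pow_mul, hγq, one_pow]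
  have hfit : fit g (q * p ^ (n + 1)) = fit (fit g (q * p ^ n)) p := by
    rw [← fit_mul hg0, pow_succ, mul_assoc]
  obtain ⟨hi1, hqi⟩ := one_le_and_orderOf_dvd_of_order_fit_sub_X hg0 hγ0 (hpow _) hi
  obtain ⟨hune, hlow⟩ := order_eq_nat.mp hi
  obtain ⟨hdvd, hcoeff⟩ := X_pow_mul_add_one_dvd_fit_sub_X_and_coeff p hi1 (X_pow_dvd_iff.mpr hlow)
  rw [← hfit] at hdvd hcoeff
  refine ⟨fun hpi j hj => ?_, fun hpi => ?_⟩
  · obtain ⟨-, hqj⟩ := one_le_and_orderOf_dvd_of_order_fit_sub_X hg0 hγ0 (hpow _) hj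
    obtain ⟨hjne, -⟩ := order_eq_nat.mp hj
    have hlt : p * i < j := by
      rcases lt_trichotomy (p * i) j with h | rfl | h
      · exact h
      · exact absurd (by rw [hcoeff, if_neg hpi, mul_zero]) hjne
      · exact absurd (X_pow_dvd_iff.mp hdvd (j + 1) (by omega)) hjne
    rw [horder] at hqi hqj
    have := Nat.le_of_dvd (Nat.sub_pos_of_lt hlt) (Nat.dvd_sub hqj (dvd_mul_of_dvd_right hqi p))
    omega
  · rw [if_pos hpi, mul_one] at hcoeff
    exact order_eq_nat.mpr ⟨hcoeff ▸ pow_ne_zero p hune, X_pow_dvd_iff.mp hdvd⟩
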